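/- arXiv:1504.05172 — 2 statements merged into one kernel-verified Lean document; each statement's English description precedes it below -/
import Mathlib

section
/- The set {g ∈ H : |g|_Y ≤ 1} is infinite; in particular, the action of H on Y is not metrically proper. -/
/-!
Each `v n` is a positive word in `a, b`, hence lies in `H`. Since `v n` is positive, the product
`w n = v n * c` is without cancellation, so the reduced word of `v n` is a prefix of that of `w n`:
`v n` is a single `W`-word and `|v n|_Y ≤ 1`. The lengths of the `v n` are pairwise distinct, so
these are infinitely many elements.
-/

open FreeGroup Filter

namespace PurelyLox

abbrev F : Type := FreeGroup (Fin 3)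

def a : F := FreeGroup.of 0
def b : F := FreeGroup.of 1
def c : F := FreeGroup.of 2

/-- The subgroup generated by `a` and `b`. -/
def H : Subgroup F := Subgroup.closure {a, b}

/-- `g` is a positive word in the generators `a` and `b`. -/
def PosAB (g : F) : Prop :=
  ∀ x ∈ g.toWord, x.2 = true ∧ x.1 ≠ 2

/-- A word is 7-aperiodic: it contains no subword `u^7` with `u` nonempty. -/
def Aperiodic7 {β : Type*} (w : List β) : Prop :=
  ¬ ∃ u : List β, u ≠ [] ∧ (List.flatten (List.replicate 7 u)) <:+: w

/-- The data of the fixed sequence `(v n)` of positive 7-aperiodic words in `a,b`,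
with pairwise distinct lengths tending to infinity. -/
structure VSeq where
  v : ℕ → F
  pos : ∀ n, PosAB (v n)
  len_ne : ∀ m n, m ≠ n → ((v m).toWord.length ≠ (v n).toWord.length)
  len_tendsto : Tendsto (fun n => (v n).toWord.length) atTop atTop
  aperiodic : ∀ n, Aperiodic7 (v n).toWord

/-- `w n = v n * c`. -/
def VSeq.w (V : VSeq) (n : ℕ) : F := V.v n * c

/-- `z` is a `W`-word: nontrivial, and its reduced word is a subword of
the reduced word of `(w n)^m` for some `n` and some `m ≠ 0`. -/
def VSeq.IsW (V : VSeq) (z : F) : Prop :=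
  z ≠ 1 ∧ ∃ (n : ℕ) (m : ℤ), m ≠ 0 ∧ z.toWord <:+: ((V.w n) ^ m).toWord

/-- `|g|_Y`: the least `k` such that `g` is a product of `k` `W`-words. -/
noncomputable def VSeq.normY (V : VSeq) (g : F) : ℕ :=
  sInf {k | ∃ l : List F, l.length = k ∧ (∀ z ∈ l, V.IsW z) ∧ l.prod = g}

/-- The vertex distance in the graph `Y`. -/
noncomputable def VSeq.dY (V : VSeq) (x y : F) : ℕ := V.normY (x⁻¹ * y)

/-- The product `u * v` is without cancellation. -/
def NoCancel (u v : F) : Prop := (u * v).toWord = u.toWord ++ v.toWord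

/-- `p 0, p 1, …, p k` is a `d_Y`-geodesic from `x` to `y`. -/
def VSeq.IsGeodesic (V : VSeq) (x y : F) (k : ℕ) (p : ℕ → F) : Prop :=
  p 0 = x ∧ p k = y ∧ (∀ i < k, V.dY (p i) (p (i + 1)) = 1) ∧ k = V.dY x y

/-- `g` is cyclically reduced. -/
def CyclicallyReduced (g : F) : Prop := (g * g).toWord = g.toWord ++ g.toWord

/-- `g` is root-free. -/
def RootFree (g : F) : Prop := ∀ (x : F) (s : ℤ), 2 ≤ |s| → g ≠ x ^ s

end PurelyLox

namespace FreeGroup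

variable {α : Type*}

theorem isReduced_of_forall_snd_eq_true {L : List (α × Bool)} (h : ∀ x ∈ L, x.2 = true) :
    IsReduced L :=
  List.Pairwise.isChain <| List.pairwise_of_forall_mem_list fun x hx y hy _ =>
    (h x hx).trans (h y hy).symm

variable [DecidableEq α]

theorem mem_closure_of_image_of_forall_mem_toWord {s : Set α} {g : FreeGroup α}
    (h : ∀ x ∈ g.toWord, x.1 ∈ s) : g ∈ Subgroup.closure (of '' s) := by
  rw [← Subtype.range_coe (s := s), ← range_map]
  refine ⟨mk (g.toWord.attach.map fun x => (⟨x.1.1, h _ x.2⟩, x.1.2)), ?_⟩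
  rw [map.mk, List.map_map]
  conv_rhs => rw [← mk_toWord (x := g)]
  congr 1
  simpa [Function.comp_def] using List.attach_map_subtype_val g.toWord

theorem toWord_mul_of_of_forall_snd_eq_true {g : FreeGroup α} (h : ∀ x ∈ g.toWord, x.2 = true)
    (i : α) : (g * of i).toWord = g.toWord ++ [(i, true)] := by
  rw [toWord_mul, toWord_of]
  refine (isReduced_of_forall_snd_eq_true fun x hx => ?_).reduce_eq
  rcases List.mem_append.mp hx with hx | hx
  · exact h x hx
  · simp_all

end FreeGroup

namespace PurelyLox

theorem PosAB.fst_mem {g : F} (hg : PosAB g) {x : Fin 3 × Bool} (hx : x ∈ g.toWord) :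
    x.1 ∈ ({0, 1} : Set (Fin 3)) := by
  have := (hg x hx).2
  simp only [Set.mem_insert_iff, Set.mem_singleton_iff]
  omega

theorem PosAB.mem_H {g : F} (hg : PosAB g) : g ∈ H := by
  rw [H, a, b, ← Set.image_pair]
  exact mem_closure_of_image_of_forall_mem_toWord fun _ => hg.fst_mem

namespace VSeq

variable (V : VSeq)

theorem normY_prod_le_length {l : List F} (hl : ∀ z ∈ l, V.IsW z) : V.normY l.prod ≤ l.length :=
  Nat.sInf_le ⟨l, rfl, hl, rfl⟩

theorem isW_v {n : ℕ} (hn : V.v n ≠ 1) : V.IsW (V.v n) := by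
  refine ⟨hn, n, 1, one_ne_zero, ?_⟩
  rw [zpow_one, w, c, toWord_mul_of_of_forall_snd_eq_true fun x hx => (V.pos n x hx).1]
  exact (List.prefix_append _ _).isInfix

theorem normY_v_le_one (n : ℕ) : V.normY (V.v n) ≤ 1 := by
  by_cases hn : V.v n = 1
  · rw [hn]
    exact (V.normY_prod_le_length (l := []) (by simp)).trans zero_le_one
  · simpa using V.normY_prod_le_length (l := [V.v n]) (by simpa using V.isW_v hn)

theorem v_injective : Function.Injective V.v := fun m n hmn =>
  by_contra fun hne => V.len_ne m n hne (by rw [hmn])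

end VSeq

/-- The set `{g ∈ H : |g|_Y ≤ 1}` is infinite; in particular the
action of `H` on `Y` is not metrically proper. -/
theorem stmt7 (V : VSeq) :
    {g : F | g ∈ H ∧ V.normY g ≤ 1}.Infinite :=
  Set.infinite_of_injective_forall_mem V.v_injective fun n =>
    ⟨(V.pos n).mem_H, V.normY_v_le_one n⟩

end PurelyLox
end

section
/- There exists C ≥ 1 such that for all x, y ∈ F: every element of the set {x·u : u a prefix of the reduced word of x⁻¹y} (the vertex set of the geodesic from x to y in the Cayley graph of F with respect to {a,b,c}) is within d_Y-distance C of some point of every d_Y-geodesic from x to y, and conversely every point of every d_Y-geodesic from x to y is within d_Y-distance C of x·u for some prefix u of the reduced word of x⁻¹y. -/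
open FreeGroup Filter

/-!
W-words are closed under inversion and under passing to nontrivial subwords, and every letter
is a W-word. Let `g = z₁ ⋯ zₙ` be a product of W-words (or trivial factors). Every prefix `u` of
the reduced word of `g` is then `d_Y`-close to a partial product `z₁ ⋯ zₘ`: cancelling `zₙ`
against `z₁ ⋯ zₙ₋₁`, either `u` is a prefix of the reduced word of `z₁ ⋯ zₙ₋₁`, or
`u⁻¹ z₁ ⋯ zₙ = s⁻¹ v` with `s` and `v` subwords of `zₙ`, hence at distance at most `2`.
Applied to a `d_Y`-geodesic `p` from `x` to `y`, this is the first half of the theorem.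
For the second half, cancel `x⁻¹ p i` against `(p i)⁻¹ y`: the point `x g` at which the two
reduced words meet is `2`-close to a geodesic point before `i` and to one after `i`, and on a
geodesic this forces it to be `6`-close to `p i`.
-/

theorem List.IsPrefix.prefix_or_exists_eq_append {α : Type*} {u l₁ l₂ : List α}
    (h : u <+: l₁ ++ l₂) : u <+: l₁ ∨ ∃ s, s <+: l₂ ∧ u = l₁ ++ s := by
  obtain ⟨r, hr⟩ := h
  rcases List.append_eq_append_iff.mp hr with ⟨s, hl₁, -⟩ | ⟨s, hu, hl₂⟩
  · exact Or.inl ⟨s, hl₁.symm⟩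
  · exact Or.inr ⟨s, ⟨r, hl₂.symm⟩, hu⟩

namespace FreeGroup

variable {α : Type*}

theorem invRev_infix_invRev {L₁ L₂ : List (α × Bool)} (h : L₁ <:+: L₂) :
    invRev L₁ <:+: invRev L₂ :=
  (h.map _).reverse

theorem IsReduced.exists_append_invRev_append {L₁ L₂ : List (α × Bool)} (h₁ : IsReduced L₁)
    (h₂ : IsReduced L₂) :
    ∃ A T B, L₁ = A ++ T ∧ L₂ = invRev T ++ B ∧ IsReduced (A ++ B) := by
  induction L₁ using List.reverseRecOn generalizing L₂ with
  | nil => exact ⟨[], [], L₂, rfl, rfl, h₂⟩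
  | append_singleton L x ih =>
    rcases L₂ with _ | ⟨y, L₂⟩
    · exact ⟨L ++ [x], [], [], by simp, rfl, by simpa using h₁⟩
    by_cases hxy : x.1 = y.1 → x.2 = y.2
    · exact ⟨L ++ [x], [], y :: L₂, by simp, rfl,
        h₁.append_overlap (isReduced_cons_cons.2 ⟨hxy, h₂⟩) (List.cons_ne_nil _ _)⟩
    · obtain ⟨A, T, B, rfl, rfl, hAB⟩ :=
        ih (h₁.infix (List.prefix_append _ _).isInfix) (h₂.infix (List.suffix_cons _ _).isInfix)
      have hy : y = (x.1, !x.2) := by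
        obtain ⟨y₁, y₂⟩ := y
        rw [Classical.not_imp] at hxy
        obtain ⟨rfl, hne⟩ := hxy
        exact Prod.ext rfl (Bool.eq_not.2 (Ne.symm hne))
      exact ⟨A, T ++ [x], B, by simp, by simp [invRev, hy], hAB⟩

variable [DecidableEq α]

theorem toWord_mk_of_infix {L : List (α × Bool)} {x : FreeGroup α} (h : L <:+: x.toWord) :
    (mk L).toWord = L := by
  rw [toWord_mk, (isReduced_toWord.infix h).reduce_eq]

/-- `t` is the part of `x` that cancels against `y` in `x * y`. -/
theorem exists_toWord_mul_eq_append (x y : FreeGroup α) : ∃ t : FreeGroup α,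
    x.toWord = (x * t⁻¹).toWord ++ t.toWord ∧ y.toWord = t⁻¹.toWord ++ (t * y).toWord ∧
      (x * y).toWord = (x * t⁻¹).toWord ++ (t * y).toWord := by
  obtain ⟨A, T, B, hx, hy, hAB⟩ :=
    (isReduced_toWord (x := x)).exists_append_invRev_append (isReduced_toWord (x := y))
  have hA : (mk A).toWord = A := toWord_mk_of_infix (hx ▸ (List.prefix_append _ _).isInfix)
  have hT : (mk T).toWord = T := toWord_mk_of_infix (hx ▸ (List.suffix_append _ _).isInfix)
  have hB : (mk B).toWord = B := toWord_mk_of_infix (hy ▸ (List.suffix_append _ _).isInfix)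
  have hx' : x = mk A * mk T := by rw [← mk_toWord (x := x), hx, mul_mk]
  have hy' : y = (mk T)⁻¹ * mk B := by rw [← mk_toWord (x := y), hy, inv_mk, mul_mk]
  refine ⟨mk T, ?_, ?_, ?_⟩
  · rw [hx, hx', mul_inv_cancel_right, hA, hT]
  · rw [hy, hy', mul_inv_cancel_left, inv_mk,
      toWord_mk_of_infix (hy ▸ (List.prefix_append _ _).isInfix), hB]
  · rw [hx', hy', mul_inv_cancel_right, mul_inv_cancel_left, mul_assoc, mul_inv_cancel_left,
      mul_mk, toWord_mk, hAB.reduce_eq, hA, hB]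

end FreeGroup

namespace PurelyLox

section WordNorm

variable {G : Type*} [Group G] (S : G → Prop)

noncomputable def wordNorm (g : G) : ℕ :=
  sInf {k | ∃ l : List G, l.length = k ∧ (∀ z ∈ l, S z) ∧ l.prod = g}

noncomputable def wordDist (x y : G) : ℕ := wordNorm S (x⁻¹ * y)

variable {S}

theorem wordNorm_le_length {g : G} {l : List G} (hl : ∀ z ∈ l, S z) (hg : l.prod = g) :
    wordNorm S g ≤ l.length :=
  Nat.sInf_le ⟨l, rfl, hl, hg⟩

theorem wordNorm_one : wordNorm S 1 = 0 :=
  Nat.le_zero.mp (wordNorm_le_length (l := []) (by simp) rfl)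

theorem exists_list_length_eq_wordNorm (hS : Submonoid.closure {g | S g} = ⊤) (g : G) :
    ∃ l : List G, l.length = wordNorm S g ∧ (∀ z ∈ l, S z) ∧ l.prod = g := by
  obtain ⟨l, hl, hg⟩ := Submonoid.exists_list_of_mem_closure (hS ▸ Submonoid.mem_top g)
  exact Nat.sInf_mem (s := {k | ∃ l : List G, l.length = k ∧ (∀ z ∈ l, S z) ∧ l.prod = g})
    ⟨l.length, l, rfl, hl, hg⟩

theorem wordNorm_mul_le (hS : Submonoid.closure {g | S g} = ⊤) (g h : G) :
    wordNorm S (g * h) ≤ wordNorm S g + wordNorm S h := by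
  obtain ⟨l₁, hl₁, hS₁, rfl⟩ := exists_list_length_eq_wordNorm hS g
  obtain ⟨l₂, hl₂, hS₂, rfl⟩ := exists_list_length_eq_wordNorm hS h
  rw [← hl₁, ← hl₂, ← List.length_append]
  exact wordNorm_le_length (fun z hz => (List.mem_append.1 hz).elim (hS₁ z) (hS₂ z))
    List.prod_append

theorem wordNorm_inv (hS : Submonoid.closure {g | S g} = ⊤) (hinv : ∀ g, S g → S g⁻¹) (g : G) :
    wordNorm S g⁻¹ = wordNorm S g := by
  have key (g : G) : wordNorm S g⁻¹ ≤ wordNorm S g := by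
    obtain ⟨l, hl, hSl, rfl⟩ := exists_list_length_eq_wordNorm hS g
    have hlen : ((l.map (·⁻¹)).reverse).length = l.length := by simp
    rw [← hl, ← hlen]
    refine wordNorm_le_length ?_ (List.prod_inv_reverse l).symm
    simpa using fun z hz => by simpa using hinv _ (hSl _ hz)
  exact le_antisymm (key g) (by simpa using key g⁻¹)

theorem wordNorm_le_one_iff (hS : Submonoid.closure {g | S g} = ⊤) {g : G} :
    wordNorm S g ≤ 1 ↔ g = 1 ∨ S g := by
  refine ⟨fun hg => ?_, ?_⟩
  · obtain ⟨l, hl, hSl, rfl⟩ := exists_list_length_eq_wordNorm hS g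
    match l, hl with
    | [], _ => exact Or.inl List.prod_nil
    | [z], _ => exact Or.inr (by simpa using hSl)
    | _ :: _ :: _, hl => simp only [List.length_cons] at hl; omega
  · rintro (rfl | hg)
    · simp [wordNorm_one]
    · simpa using wordNorm_le_length (l := [g]) (by simpa) (by simp)

theorem wordDist_self (x : G) : wordDist S x x = 0 := by
  rw [wordDist, inv_mul_cancel, wordNorm_one]

theorem wordDist_comm (hS : Submonoid.closure {g | S g} = ⊤) (hinv : ∀ g, S g → S g⁻¹)
    (x y : G) : wordDist S x y = wordDist S y x := by
  rw [wordDist, wordDist, ← wordNorm_inv hS hinv, mul_inv_rev, inv_inv]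

theorem wordDist_triangle (hS : Submonoid.closure {g | S g} = ⊤) (x y z : G) :
    wordDist S x z ≤ wordDist S x y + wordDist S y z := by
  have h : x⁻¹ * z = x⁻¹ * y * (y⁻¹ * z) := by group
  rw [wordDist, h]
  exact wordNorm_mul_le hS _ _

theorem wordDist_le_sub_of_step_le_one (hS : Submonoid.closure {g | S g} = ⊤) {p : ℕ → G}
    {j : ℕ} (hp : ∀ s < j, wordDist S (p s) (p (s + 1)) ≤ 1) {i : ℕ} (hij : i ≤ j) :
    wordDist S (p i) (p j) ≤ j - i := by
  induction j, hij using Nat.le_induction with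
  | base => simp [wordDist_self]
  | succ j hij ih =>
    calc wordDist S (p i) (p (j + 1)) ≤ wordDist S (p i) (p j) + wordDist S (p j) (p (j + 1)) :=
          wordDist_triangle hS _ _ _
      _ ≤ j - i + 1 := add_le_add (ih fun s hs => hp s (by omega)) (hp j (by omega))
      _ = j + 1 - i := by omega

theorem le_wordDist_of_geodesic (hS : Submonoid.closure {g | S g} = ⊤) {p : ℕ → G} {k : ℕ}
    (hp : ∀ s < k, wordDist S (p s) (p (s + 1)) ≤ 1) (hk : k ≤ wordDist S (p 0) (p k)) {j : ℕ}
    (hj : j ≤ k) : j ≤ wordDist S (p 0) (p j) := by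
  have := wordDist_triangle hS (p 0) (p j) (p k)
  have := wordDist_le_sub_of_step_le_one hS hp hj
  omega

theorem wordDist_le_three_mul_of_geodesic (hS : Submonoid.closure {g | S g} = ⊤)
    (hinv : ∀ g, S g → S g⁻¹) {p : ℕ → G} {k : ℕ}
    (hp : ∀ s < k, wordDist S (p s) (p (s + 1)) ≤ 1) (hk : k ≤ wordDist S (p 0) (p k))
    {q : G} {r i j₁ j₂ : ℕ} (hj₁ : j₁ ≤ i) (hj₂ : i ≤ j₂) (hj₂k : j₂ ≤ k)
    (hq₁ : wordDist S q (p j₁) ≤ r) (hq₂ : wordDist S q (p j₂) ≤ r) :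
    wordDist S (p i) q ≤ 3 * r := by
  have hstep (j : ℕ) (hj : j ≤ k) : ∀ s < j, wordDist S (p s) (p (s + 1)) ≤ 1 :=
    fun s hs => hp s (by omega)
  have h₂ := le_wordDist_of_geodesic hS hp hk hj₂k
  have h₀₁ := wordDist_le_sub_of_step_le_one hS (hstep j₁ (by omega)) (Nat.zero_le j₁)
  have h₀₂ := wordDist_triangle hS (p 0) (p j₁) (p j₂)
  have h₁₂ := wordDist_triangle hS (p j₁) q (p j₂)
  have hi₂ := wordDist_le_sub_of_step_le_one hS (hstep j₂ hj₂k) hj₂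
  have hiq := wordDist_triangle hS (p i) (p j₂) q
  rw [wordDist_comm hS hinv (p j₁) q] at h₁₂
  rw [wordDist_comm hS hinv (p j₂) q] at hiq
  omega

end WordNorm

section FreeGroupWordNorm

variable {α : Type*} [DecidableEq α] {S : FreeGroup α → Prop}

theorem wordNorm_le_one_of_infix (hS : Submonoid.closure {g | S g} = ⊤)
    (hinfix : ∀ z g, S z → g ≠ 1 → g.toWord <:+: z.toWord → S g) {z g : FreeGroup α}
    (hz : wordNorm S z ≤ 1) (hg : g.toWord <:+: z.toWord) : wordNorm S g ≤ 1 := by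
  rw [wordNorm_le_one_iff hS] at hz ⊢
  rcases hz with rfl | hz
  · rw [toWord_one, List.infix_nil, toWord_eq_nil_iff] at hg
    exact Or.inl hg
  · by_cases hg₁ : g = 1
    · exact Or.inl hg₁
    · exact Or.inr (hinfix z g hz hg₁ hg)

theorem exists_wordDist_mul_mk_le_two (hS : Submonoid.closure {g | S g} = ⊤)
    (hinv : ∀ g, S g → S g⁻¹) (hinfix : ∀ z g, S z → g ≠ 1 → g.toWord <:+: z.toWord → S g)
    {p : ℕ → FreeGroup α} {n : ℕ} (hp : ∀ i < n, wordDist S (p i) (p (i + 1)) ≤ 1)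
    {u : List (α × Bool)} (hu : u <+: ((p 0)⁻¹ * p n).toWord) :
    ∃ m ≤ n, wordDist S (p 0 * mk u) (p m) ≤ 2 := by
  induction n generalizing u with
  | zero =>
    rw [inv_mul_cancel, toWord_one, List.prefix_nil] at hu
    subst hu
    exact ⟨0, le_rfl, by simp [← one_eq_mk, wordDist_self]⟩
  | succ n ih =>
    set P := (p 0)⁻¹ * p n
    set z := (p n)⁻¹ * p (n + 1)
    obtain ⟨t, hP, hz, hPz⟩ := exists_toWord_mul_eq_append P z
    have hprod : P * z = (p 0)⁻¹ * p (n + 1) := by simp only [P, z]; group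
    rw [← hprod, hPz] at hu
    rcases hu.prefix_or_exists_eq_append with hu | ⟨s, hs, rfl⟩
    · obtain ⟨m, hm, h⟩ := ih (fun i hi => hp i (by omega)) (hu.trans (hP ▸ List.prefix_append _ _))
      exact ⟨m, by omega, h⟩
    · refine ⟨n + 1, le_rfl, ?_⟩
      have hsz : s <:+: z.toWord := hs.isInfix.trans (hz ▸ (List.suffix_append _ _).isInfix)
      have heq : (p 0 * mk ((P * t⁻¹).toWord ++ s))⁻¹ * p (n + 1) = (mk s)⁻¹ * (t * z) := by
        rw [← mul_mk, mk_toWord]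
        simp only [P, z]
        group
      have hzn : wordNorm S z ≤ 1 := hp n (by omega)
      calc wordDist S _ _ ≤ wordNorm S (mk s)⁻¹ + wordNorm S (t * z) := by
            rw [wordDist, heq]; exact wordNorm_mul_le hS _ _
        _ ≤ 1 + 1 := by
          rw [wordNorm_inv hS hinv]
          gcongr
          · exact wordNorm_le_one_of_infix hS hinfix hzn (by rwa [toWord_mk_of_infix hsz])
          · exact wordNorm_le_one_of_infix hS hinfix hzn (hz ▸ (List.suffix_append _ _).isInfix)

theorem exists_prefix_wordDist_le_six (hS : Submonoid.closure {g | S g} = ⊤)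
    (hinv : ∀ g, S g → S g⁻¹) (hinfix : ∀ z g, S z → g ≠ 1 → g.toWord <:+: z.toWord → S g)
    {p : ℕ → FreeGroup α} {k : ℕ} (hp : ∀ i < k, wordDist S (p i) (p (i + 1)) ≤ 1)
    (hk : k ≤ wordDist S (p 0) (p k)) {i : ℕ} (hi : i ≤ k) :
    ∃ u, u <+: ((p 0)⁻¹ * p k).toWord ∧ wordDist S (p i) (p 0 * mk u) ≤ 6 := by
  obtain ⟨t, hP, hQ, hPQ⟩ := exists_toWord_mul_eq_append ((p 0)⁻¹ * p i) ((p i)⁻¹ * p k)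
  have hprod : (p 0)⁻¹ * p i * ((p i)⁻¹ * p k) = (p 0)⁻¹ * p k := by group
  set g := (p 0)⁻¹ * p i * t⁻¹
  refine ⟨g.toWord, hprod ▸ hPQ ▸ List.prefix_append _ _, ?_⟩
  obtain ⟨j₁, hj₁, h₁⟩ := exists_wordDist_mul_mk_le_two hS hinv hinfix
    (fun j hj => hp j (by omega)) (hP ▸ List.prefix_append _ _)
  have hki : i + (k - i) = k := by omega
  obtain ⟨m, hm, h₂⟩ := exists_wordDist_mul_mk_le_two hS hinv hinfix (p := fun s => p (i + s))
    (n := k - i) (fun j hj => hp (i + j) (by omega)) (u := t⁻¹.toWord)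
    (by rw [add_zero, hki]; exact hQ ▸ List.prefix_append _ _)
  have hg : p i * mk t⁻¹.toWord = p 0 * mk g.toWord := by
    simp only [mk_toWord, g]
    group
  simp only [add_zero, hg] at h₂
  exact wordDist_le_three_mul_of_geodesic hS hinv hp hk hj₁ (Nat.le_add_right i m)
    (by omega) h₁ h₂

end FreeGroupWordNorm

theorem Aperiodic7.length_lt_of_forall_eq {β : Type*} {L : List β} {a : β} (h : Aperiodic7 L)
    (hL : ∀ x ∈ L, x = a) : L.length < 7 := by
  by_contra hlen
  refine h ⟨[a], List.cons_ne_nil _ _, ?_⟩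
  rw [List.flatten_replicate_singleton, List.eq_replicate_of_mem hL]
  exact (List.prefix_replicate_iff.2 ⟨by simpa using hlen, by simp⟩).isInfix

namespace VSeq

variable (V : VSeq)

theorem dY_eq_wordDist : V.dY = wordDist V.IsW := rfl

theorem isW_inv {z : F} (hz : V.IsW z) : V.IsW z⁻¹ := by
  obtain ⟨hz₁, n, m, hm, hzw⟩ := hz
  refine ⟨inv_ne_one.2 hz₁, n, -m, neg_ne_zero.2 hm, ?_⟩
  rw [toWord_inv, zpow_neg, toWord_inv]
  exact invRev_infix_invRev hzw

theorem isW_of_infix {z g : F} (hz : V.IsW z) (hg : g ≠ 1) (h : g.toWord <:+: z.toWord) :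
    V.IsW g := by
  obtain ⟨-, n, m, hm, hzw⟩ := hz
  exact ⟨hg, n, m, hm, h.trans hzw⟩

theorem toWord_w (n : ℕ) : (V.w n).toWord = (V.v n).toWord ++ [(2, true)] := by
  have hred : FreeGroup.IsReduced ((V.v n).toWord ++ [(2, true)]) := by
    rw [FreeGroup.IsReduced, List.isChain_append]
    refine ⟨isReduced_toWord, List.isChain_singleton _, fun x hx y hy h => ?_⟩
    obtain rfl : y = (2, true) := by simpa [eq_comm] using hy
    exact absurd h (V.pos n x (List.mem_of_mem_getLast? hx)).2
  have hw : V.w n = FreeGroup.mk ((V.v n).toWord ++ [(2, true)]) := by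
    rw [← mul_mk, mk_toWord]
    rfl
  rw [hw, toWord_mk, hred.reduce_eq]

theorem exists_mem_toWord_v {i : Fin 3} (hi : i ≠ 2) : ∃ n, (i, true) ∈ (V.v n).toWord := by
  have hother : ∀ i j : Fin 3, i ≠ 2 → j ≠ 2 → j ≠ i → j = 1 - i := by decide
  obtain ⟨n, hn⟩ := (V.len_tendsto.eventually_ge_atTop 7).exists
  refine ⟨n, by_contra fun hmem => ?_⟩
  refine absurd ((V.aperiodic n).length_lt_of_forall_eq (a := (1 - i, true)) fun x hx => ?_)
    (not_lt.2 hn)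
  obtain ⟨htrue, hx₂⟩ := V.pos n x hx
  have hxi : x.1 ≠ i := fun h => hmem (by rwa [← h, ← htrue])
  exact Prod.ext (hother i x.1 hi hx₂ hxi) htrue

theorem isW_of (i : Fin 3) : V.IsW (of i) := by
  refine ⟨of_ne_one i, ?_⟩
  by_cases hi : i = 2
  · subst hi
    refine ⟨0, 1, one_ne_zero, ?_⟩
    rw [zpow_one, toWord_of, toWord_w]
    exact (List.suffix_append _ _).isInfix
  · obtain ⟨n, hn⟩ := V.exists_mem_toWord_v hi
    refine ⟨n, 1, one_ne_zero, ?_⟩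
    rw [zpow_one, toWord_of, toWord_w]
    exact ((List.singleton_infix_iff _ _).2 hn).trans (List.prefix_append _ _).isInfix

theorem closure_isW : Submonoid.closure {g | V.IsW g} = ⊤ := by
  have h := Subgroup.closure_toSubmonoid (Set.range (of : Fin 3 → F))
  rw [closure_range_of, Subgroup.top_toSubmonoid] at h
  rw [eq_top_iff, h]
  refine Submonoid.closure_mono ?_
  rintro g (⟨i, rfl⟩ | ⟨i, hi⟩)
  · exact V.isW_of i
  · rw [← inv_inv g, ← hi]
    exact V.isW_inv (V.isW_of i)

end VSeq

/-- Geodesics of `X` (the Cayley graph of `F` w.r.t. `{a,b,c}`) are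
uniformly Hausdorff close, in `d_Y`, to `d_Y`-geodesics with the same endpoints. -/
theorem stmt8 (V : VSeq) :
    ∃ C : ℝ, 1 ≤ C ∧
      ∀ x y : F, ∀ (k : ℕ) (p : ℕ → F), V.IsGeodesic x y k p →
        (∀ u : List (Fin 3 × Bool), u <+: (x⁻¹ * y).toWord →
          ∃ i ≤ k, (V.dY (x * FreeGroup.mk u) (p i) : ℝ) ≤ C) ∧
        (∀ i ≤ k, ∃ u : List (Fin 3 × Bool), u <+: (x⁻¹ * y).toWord ∧
          (V.dY (p i) (x * FreeGroup.mk u) : ℝ) ≤ C) := by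
  refine ⟨6, by norm_num, ?_⟩
  rintro _ _ k p ⟨rfl, rfl, hstep, hk⟩
  rw [V.dY_eq_wordDist] at hstep hk ⊢
  have hp : ∀ i < k, wordDist V.IsW (p i) (p (i + 1)) ≤ 1 := fun i hi => (hstep i hi).le
  refine ⟨fun u hu => ?_, fun i hi => ?_⟩
  · obtain ⟨m, hm, h⟩ := exists_wordDist_mul_mk_le_two V.closure_isW (fun _ => V.isW_inv)
      (fun _ _ => V.isW_of_infix) hp hu
    exact ⟨m, hm, by exact_mod_cast h.trans (by norm_num)⟩
  · obtain ⟨u, hu, h⟩ := exists_prefix_wordDist_le_six V.closure_isW (fun _ => V.isW_inv)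
      (fun _ _ => V.isW_of_infix) hp hk.le hi
    exact ⟨u, hu, by exact_mod_cast h⟩

end PurelyLox
end
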